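/- For the 1-loop massless multiedge in D = D_0 - 2\epsilon dimensions, the Mellin transform F(\epsilon,\rho) = \frac{\Gamma(2-\frac{D_0}{2}-\rho+\epsilon)\Gamma(\frac{D_0}{2}-\epsilon-1+\rho)\Gamma(\frac{D_0}{2}-\epsilon-1)}{e^{-\gamma_E\epsilon}\Gamma(D_0-2-2\epsilon+\rho)\Gamma(1-\rho)} at D_0 = 4 satisfies the reflection identity F(\epsilon, \rho+\epsilon) = \frac{-e^{\gamma_E\epsilon}\pi\Gamma(1-\epsilon)}{\sin(\pi\rho)\Gamma(1-\epsilon-\rho)\Gamma(2-\epsilon+\rho)}, and consequently \frac{1}{F(\epsilon,\rho+\epsilon)} = T_0(\rho)(1 + \epsilon T_1(\rho) + O(\epsilon^2)) with T_0(\rho) = -\rho(1+\rho) and T_1(\rho) = -H_{-\rho} - H_{1+\rho}, where H_z := \gamma_E + \psi(z+1). -/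

import Mathlib

/-!
Substituting `ρ + ε` for `ρ` removes `ε` from the arguments of `Γ(-ρ) Γ(1 + ρ)`, which the
reflection formula turns into `-π / sin (π ρ)`. Hence
`f(ε) := 1 / F(ε, ρ + ε) = -(sin (π ρ) / π) Γ(1 - ρ - ε) Γ(2 + ρ - ε) / (e^{γ ε} Γ(1 - ε))`
is analytic and nonzero at `ε = 0` when `ρ ∉ ℤ`, so `f(ε) = f(0) (1 + ε (log f)'(0)) + O(ε²)`.
Reflection and `Γ(s + 1) = s Γ(s)` give `f(0) = -ρ (1 + ρ)`; the logarithmic derivative is a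
sum of digamma values, and `ψ(1) = -γ_E` turns it into `-H_{-ρ} - H_{1+ρ}`.
-/

open Asymptotics

/-- The complex digamma function `ψ = Γ'/Γ`. -/
noncomputable def digammaC (z : ℂ) : ℂ := deriv Complex.Gamma z / Complex.Gamma z

/-- Analytically continued harmonic number `H_z = γ_E + ψ(z+1)`. -/
noncomputable def harmonicC (z : ℂ) : ℂ :=
  (Real.eulerMascheroniConstant : ℂ) + digammaC (z + 1)

/-- The Mellin transform of the 1-loop massless multiedge in `D = D₀ - 2ε`
dimensions. -/
noncomputable def mellinF (D0 ε ρ : ℂ) : ℂ :=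
  Complex.Gamma (2 - D0/2 - ρ + ε) * Complex.Gamma (D0/2 - ε - 1 + ρ)
      * Complex.Gamma (D0/2 - ε - 1) /
    (Complex.exp (-(Real.eulerMascheroniConstant : ℂ) * ε)
      * Complex.Gamma (D0 - 2 - 2*ε + ρ) * Complex.Gamma (1 - ρ))

open Filter Topology
open scoped Real

theorem AnalyticAt.isBigO_sub_taylor_one {𝕜 E : Type*} [NontriviallyNormedField 𝕜]
    [NormedAddCommGroup E] [NormedSpace 𝕜 E] {f : 𝕜 → E} {x : 𝕜} (hf : AnalyticAt 𝕜 f x) :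
    (fun y => f y - (f x + (y - x) • deriv f x)) =O[𝓝 x] fun y => (y - x) ^ 2 := by
  obtain ⟨p, hp⟩ := hf
  have hcoeff : p.coeff 0 = f x := hp.coeff_zero _
  have hpartial : ∀ y, p.partialSum 2 y = f x + y • deriv f x := by
    intro y
    simp [FormalMultilinearSeries.partialSum, Finset.sum_range_succ, hcoeff, hp.deriv]
  have h0 : (fun y => f (x + y) - (f x + y • deriv f x)) =O[𝓝 0] fun y => y ^ 2 := by
    simpa [hpartial, ← norm_pow, isBigO_norm_right] using hp.isBigO_sub_partialSum_pow 2
  have hshift : Tendsto (fun y : 𝕜 => y - x) (𝓝 x) (𝓝 0) := by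
    simpa using (tendsto_id (x := 𝓝 x)).sub_const x
  simpa [Function.comp_def] using h0.comp_tendsto hshift

theorem AnalyticAt.isBigO_sub_mul_one_add_logDeriv {𝕜 : Type*} [NontriviallyNormedField 𝕜]
    {f : 𝕜 → 𝕜} {x : 𝕜} (hf : AnalyticAt 𝕜 f x) (hfx : f x ≠ 0) :
    (fun y => f y - f x * (1 + (y - x) * logDeriv f x)) =O[𝓝 x] fun y => (y - x) ^ 2 := by
  have h : ∀ y, f x * (1 + (y - x) * logDeriv f x) = f x + (y - x) • deriv f x := by
    intro y
    rw [logDeriv_apply, smul_eq_mul]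
    field_simp
  simpa only [h] using hf.isBigO_sub_taylor_one

theorem logDeriv_comp_const_sub {𝕜 : Type*} [NontriviallyNormedField 𝕜] (f : 𝕜 → 𝕜) (a x : 𝕜) :
    logDeriv (fun y => f (a - y)) x = -logDeriv f (a - x) := by
  rw [logDeriv_apply, logDeriv_apply, deriv_comp_const_sub, neg_div]

theorem intCast_add_ne_neg_natCast {R : Type*} [CommRing R] {ρ : R} (hρ : ∀ n : ℤ, ρ ≠ n)
    (k : ℤ) (m : ℕ) : k + ρ ≠ -m := fun h => hρ (-m - k) (by push_cast; linear_combination h)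

theorem intCast_sub_ne_neg_natCast {R : Type*} [CommRing R] {ρ : R} (hρ : ∀ n : ℤ, ρ ≠ n)
    (k : ℤ) (m : ℕ) : k - ρ ≠ -m := fun h => hρ (m + k) (by push_cast; linear_combination -h)

namespace Complex

theorem logDeriv_exp_const_mul (a x : ℂ) : logDeriv (fun y => exp (a * y)) x = a := by
  have h : HasDerivAt (fun y => exp (a * y)) (exp (a * x) * a) x := by
    simpa using ((hasDerivAt_id x).const_mul a).cexp
  rw [logDeriv_apply, h.deriv]
  field_simp [exp_ne_zero]

theorem analyticAt_Gamma {s : ℂ} (hs : ∀ m : ℕ, s ≠ -m) : AnalyticAt ℂ Gamma s := by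
  simpa [Pi.inv_def] using
    (differentiable_one_div_Gamma.analyticAt s).inv (inv_ne_zero (Gamma_ne_zero hs))

theorem analyticAt_Gamma_const_sub {c : ℂ} (hc : ∀ m : ℕ, c ≠ -m) :
    AnalyticAt ℂ (fun y => Gamma (c - y)) 0 :=
  (analyticAt_Gamma (by simpa using hc)).comp (analyticAt_const.sub analyticAt_id)

theorem sin_pi_mul_ne_zero {ρ : ℂ} (hρ : ∀ n : ℤ, ρ ≠ n) : sin (π * ρ) ≠ 0 :=
  sin_ne_zero_iff.mpr fun k h => hρ k (mul_left_cancel₀ (ofReal_ne_zero.mpr Real.pi_ne_zero)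
    (by linear_combination h))

theorem sin_mul_Gamma_one_sub_mul_Gamma_two_add {ρ : ℂ} (hsin : sin (π * ρ) ≠ 0) :
    sin (π * ρ) * Gamma (1 - ρ) * Gamma (2 + ρ) = π * (ρ * (1 + ρ)) := by
  have hρ : ρ ≠ 0 := by rintro rfl; simp at hsin
  have h1ρ : 1 + ρ ≠ 0 := by
    intro h
    rw [eq_neg_of_add_eq_zero_right h, mul_neg_one, sin_neg, sin_pi, neg_zero] at hsin
    exact hsin rfl
  have hrec : Gamma (2 + ρ) = (1 + ρ) * (ρ * Gamma ρ) := by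
    rw [show 2 + ρ = (1 + ρ) + 1 by ring, Gamma_add_one _ h1ρ, add_comm 1 ρ, Gamma_add_one _ hρ]
  have hrefl : sin (π * ρ) * (Gamma ρ * Gamma (1 - ρ)) = π := by
    rw [Gamma_mul_Gamma_one_sub]
    field_simp
  rw [hrec]
  linear_combination ρ * (1 + ρ) * hrefl

end Complex

open Complex

theorem mellinF_four_add (ε ρ : ℂ) :
    mellinF 4 ε (ρ + ε) =
      -exp ((Real.eulerMascheroniConstant : ℂ) * ε) * π * Gamma (1 - ε) /
        (sin (π * ρ) * Gamma (1 - ε - ρ) * Gamma (2 - ε + ρ)) := by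
  have hrefl : Gamma (-ρ) * Gamma (1 + ρ) = -π / sin (π * ρ) := by
    rw [← sub_neg_eq_add 1 ρ, Gamma_mul_Gamma_one_sub, mul_neg, sin_neg, div_neg, neg_div]
  unfold mellinF
  rw [show (2 : ℂ) - 4 / 2 - (ρ + ε) + ε = -ρ by ring,
    show (4 : ℂ) / 2 - ε - 1 + (ρ + ε) = 1 + ρ by ring, show (4 : ℂ) / 2 - ε - 1 = 1 - ε by ring,
    show (4 : ℂ) - 2 - 2 * ε + (ρ + ε) = 2 - ε + ρ by ring,
    show (1 : ℂ) - (ρ + ε) = 1 - ε - ρ by ring, hrefl, neg_mul, exp_neg]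
  simp only [div_eq_mul_inv, mul_inv, inv_inv]
  ring

theorem one_div_mellinF_four_add (ρ : ℂ) :
    (fun ε => 1 / mellinF 4 ε (ρ + ε)) = fun ε =>
      -(sin (π * ρ) / π) * (Gamma ((1 - ρ) - ε) * Gamma ((2 + ρ) - ε) /
        (exp (Real.eulerMascheroniConstant * ε) * Gamma (1 - ε))) := by
  funext ε
  rw [mellinF_four_add, one_div_div, sub_right_comm, sub_add_eq_add_sub]
  ring

theorem one_div_mellinF_four_zero {ρ : ℂ} (hρ : ∀ n : ℤ, ρ ≠ n) :
    1 / mellinF 4 0 ρ = -ρ * (1 + ρ) := by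
  have h := congrFun (one_div_mellinF_four_add ρ) 0
  simp only [add_zero, sub_zero, mul_zero, exp_zero, Gamma_one, mul_one, div_one] at h
  rw [h, neg_mul, div_mul_eq_mul_div, ← mul_assoc,
    sin_mul_Gamma_one_sub_mul_Gamma_two_add (sin_pi_mul_ne_zero hρ),
    mul_div_cancel_left₀ _ (ofReal_ne_zero.mpr Real.pi_ne_zero), neg_mul]

theorem analyticAt_one_div_mellinF_four_add {ρ : ℂ} (hρ : ∀ n : ℤ, ρ ≠ n) :
    AnalyticAt ℂ (fun ε => 1 / mellinF 4 ε (ρ + ε)) 0 := by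
  have h1ρ : ∀ m : ℕ, 1 - ρ ≠ -m := by exact_mod_cast intCast_sub_ne_neg_natCast hρ 1
  have h2ρ : ∀ m : ℕ, 2 + ρ ≠ -m := by exact_mod_cast intCast_add_ne_neg_natCast hρ 2
  have h1 : ∀ m : ℕ, (1 : ℂ) ≠ -m := by norm_cast; simp
  have hE : AnalyticAt ℂ (fun ε => exp (Real.eulerMascheroniConstant * ε)) 0 := by fun_prop
  rw [one_div_mellinF_four_add]
  exact analyticAt_const.mul
    (((analyticAt_Gamma_const_sub h1ρ).mul (analyticAt_Gamma_const_sub h2ρ)).div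
      (hE.mul (analyticAt_Gamma_const_sub h1)) (by simp))

theorem logDeriv_one_div_mellinF_four_add {ρ : ℂ} (hρ : ∀ n : ℤ, ρ ≠ n) :
    logDeriv (fun ε => 1 / mellinF 4 ε (ρ + ε)) 0 = -harmonicC (-ρ) - harmonicC (1 + ρ) := by
  have h1ρ : ∀ m : ℕ, 1 - ρ ≠ -m := by exact_mod_cast intCast_sub_ne_neg_natCast hρ 1
  have h2ρ : ∀ m : ℕ, 2 + ρ ≠ -m := by exact_mod_cast intCast_add_ne_neg_natCast hρ 2
  have h1 : ∀ m : ℕ, (1 : ℂ) ≠ -m := by norm_cast; simp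
  have hA := (analyticAt_Gamma_const_sub h1ρ).differentiableAt
  have hB := (analyticAt_Gamma_const_sub h2ρ).differentiableAt
  have hC := (analyticAt_Gamma_const_sub h1).differentiableAt
  have hE : DifferentiableAt ℂ (fun ε => exp (Real.eulerMascheroniConstant * ε)) 0 := by fun_prop
  have hc : -(sin (π * ρ) / π) ≠ 0 :=
    neg_ne_zero.mpr (div_ne_zero (sin_pi_mul_ne_zero hρ) (ofReal_ne_zero.mpr Real.pi_ne_zero))
  have hA0 := Gamma_ne_zero h1ρ
  have hB0 := Gamma_ne_zero h2ρ
  have hψ1 : logDeriv Gamma 1 = -Real.eulerMascheroniConstant := digamma_one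
  rw [one_div_mellinF_four_add, logDeriv_const_mul _ _ hc,
    logDeriv_div _ (by simpa using mul_ne_zero hA0 hB0) (by simp) (hA.fun_mul hB) (hE.fun_mul hC),
    logDeriv_mul _ (by simpa using hA0) (by simpa using hB0) hA hB,
    logDeriv_mul _ (by simp) (by simp) hE hC,
    logDeriv_comp_const_sub, logDeriv_comp_const_sub, logDeriv_comp_const_sub,
    logDeriv_exp_const_mul]
  simp only [sub_zero, hψ1, harmonicC, digammaC, ← logDeriv_apply, neg_add_eq_sub,
    show 1 + ρ + 1 = 2 + ρ by ring]
  ring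

/-- at `D₀ = 4` the Mellin transform satisfies the reflection
identity
`F(ε, ρ+ε) = -e^{γ_E ε} π Γ(1-ε) / (sin(πρ) Γ(1-ε-ρ) Γ(2-ε+ρ))`,
and consequently `1/F(ε,ρ+ε) = T₀(ρ)(1 + ε T₁(ρ) + O(ε²))` with
`T₀(ρ) = -ρ(1+ρ)` and `T₁(ρ) = -H_{-ρ} - H_{1+ρ}`. -/
theorem mellin_multiedge_D4 :
    (∀ ε ρ : ℂ, Complex.sin (Real.pi * ρ) ≠ 0 →
      mellinF 4 ε (ρ + ε) =
        -Complex.exp ((Real.eulerMascheroniConstant : ℂ) * ε) * (Real.pi : ℂ)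
            * Complex.Gamma (1 - ε) /
          (Complex.sin (Real.pi * ρ) * Complex.Gamma (1 - ε - ρ)
            * Complex.Gamma (2 - ε + ρ))) ∧
    (∀ ρ : ℂ, (∀ n : ℤ, ρ ≠ (n : ℂ)) →
      (fun ε : ℂ => 1 / mellinF 4 ε (ρ + ε) -
          (-ρ * (1 + ρ)) * (1 + ε * (-harmonicC (-ρ) - harmonicC (1 + ρ))))
        =O[nhds (0:ℂ)] fun ε => ε ^ 2) := by
  refine ⟨fun ε ρ _ => mellinF_four_add ε ρ, fun ρ hρ => ?_⟩
  have hvalue : 1 / mellinF 4 0 (ρ + 0) = -ρ * (1 + ρ) := by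
    rw [add_zero, one_div_mellinF_four_zero hρ]
  have htaylor := (analyticAt_one_div_mellinF_four_add hρ).isBigO_sub_mul_one_add_logDeriv
    (hvalue.trans_ne ?_)
  · simpa only [hvalue, logDeriv_one_div_mellinF_four_add hρ, sub_zero] using htaylor
  · exact mul_ne_zero (neg_ne_zero.mpr (by simpa using hρ 0))
      (by simpa using intCast_add_ne_neg_natCast hρ 1 0)
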